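/- Define Ψ : c_0 × ℝ → c by Ψ(x, t) = (x_1 + t, x_2 + t, ...), and let μ be the pushforward under Ψ of μ_0 × ν, where μ_0 is a fully supported non-aligned measure on c_0 and ν is the standard normal law on ℝ. Then μ is fully supported on c: for every open ball U = B(x, r) in c, μ(U) > 0. -/

import Mathlib

open Filter Topology MeasureTheory ProbabilityTheory

/-- The map `Ψ : c₀ × ℝ → c`, `Ψ(x, t) = (x₁ + t, x₂ + t, …)`. -/
def Psi (p : (ℕ → ℝ) × ℝ) : ℕ → ℝ := fun n => p.1 n + p.2

/-!
With `a = lim x`, the sequence `y = x - a` lies in `c₀`, and `Ψ` maps the product of the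
sup-ball of radius `r / 2` about `y` with the interval of radius `r / 2` about `a` into the
sup-ball of radius `r` about `x`. The first factor has positive `μ₀`-measure by full support,
the second positive Gaussian measure, so the product measure, and with it its image under `Ψ`,
charges the ball about `x`.
-/

/-- The open sup-distance ball, written without `⨆` so that it makes sense (and is empty)
when `z - x` is unbounded. -/
def supBall {ι : Type*} (x : ι → ℝ) (r : ℝ) : Set (ι → ℝ) :=
  {z | ∃ s : ℝ, s < r ∧ ∀ n, |z n - x n| ≤ s}

lemma measurable_Psi : Measurable Psi :=
  measurable_pi_lambda _ fun n => ((measurable_pi_apply n).comp measurable_fst).add measurable_snd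

lemma supBall_prod_ball_subset_preimage_Psi (x : ℕ → ℝ) (a s δ : ℝ) :
    supBall (fun n => x n - a) s ×ˢ Metric.ball a δ ⊆ Psi ⁻¹' supBall x (s + δ) := by
  rintro ⟨z, t⟩ ⟨⟨s', hs', hz⟩, ht⟩
  rw [Metric.mem_ball, Real.dist_eq] at ht
  refine ⟨s' + |t - a|, by linarith, fun n => ?_⟩
  calc |Psi (z, t) n - x n| = |(z n - (x n - a)) + (t - a)| := by simp only [Psi]; ring_nf
    _ ≤ |z n - (x n - a)| + |t - a| := abs_add_le _ _
    _ ≤ s' + |t - a| := by gcongr; exact hz n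

lemma isOpenPosMeasure_gaussianReal (m : ℝ) {v : NNReal} (hv : v ≠ 0) :
    (gaussianReal m v).IsOpenPosMeasure :=
  (gaussianReal_absolutelyContinuous' m hv).isOpenPosMeasure

theorem pushforward_fully_supported_on_c_general
    (μ₀ : Measure (ℕ → ℝ))
    (hfull : ∀ y : ℕ → ℝ, Tendsto y atTop (nhds 0) → ∀ r : ℝ, 0 < r →
      0 < μ₀ {z | Tendsto z atTop (nhds 0) ∧ ∃ s : ℝ, s < r ∧ ∀ n, |z n - y n| ≤ s})
    (μ : Measure (ℕ → ℝ))
    (hμ : μ = Measure.map Psi (μ₀.prod (gaussianReal 0 1)))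
    (x : ℕ → ℝ) (hx : ∃ a : ℝ, Tendsto x atTop (nhds a)) (r : ℝ) (hr : 0 < r) :
    0 < μ {z | ∃ s : ℝ, s < r ∧ ∀ n, |z n - x n| ≤ s} := by
  obtain ⟨a, ha⟩ := hx
  have hy : Tendsto (fun n => x n - a) atTop (𝓝 0) := by simpa using ha.sub_const a
  set A := supBall (fun n => x n - a) (r / 2)
  set B := Metric.ball a (r / 2)
  have hA : 0 < μ₀ A := (hfull _ hy _ (half_pos hr)).trans_le (measure_mono fun _ hz => hz.2)
  have := isOpenPosMeasure_gaussianReal 0 one_ne_zero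
  have hB : 0 < gaussianReal 0 1 B := Metric.measure_ball_pos _ _ (half_pos hr)
  subst hμ
  calc 0 < μ₀ A * gaussianReal 0 1 B := ENNReal.mul_pos hA.ne' hB.ne'
    _ = μ₀.prod (gaussianReal 0 1) (A ×ˢ B) := (Measure.prod_prod _ _).symm
    _ ≤ μ₀.prod (gaussianReal 0 1) (Psi ⁻¹' supBall x (r / 2 + r / 2)) :=
        measure_mono (supBall_prod_ball_subset_preimage_Psi x a _ _)
    _ ≤ Measure.map Psi (μ₀.prod (gaussianReal 0 1)) (supBall x r) := by
        rw [add_halves]; exact Measure.le_map_apply measurable_Psi.aemeasurable _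

/-- pushing forward `μ₀ × ν` (with `μ₀` fully supported and non-aligned on
`c₀` and `ν` the standard normal law) under `Ψ` yields a measure fully supported on `c`:
every open sup-norm ball in `c` has positive measure. -/
theorem pushforward_fully_supported_on_c
    (μ₀ : Measure (ℕ → ℝ)) [IsProbabilityMeasure μ₀]
    (hμ₀c0 : μ₀ {x | Tendsto x atTop (nhds 0)} = 1)
    (hfull : ∀ y : ℕ → ℝ, Tendsto y atTop (nhds 0) → ∀ r : ℝ, 0 < r →
      0 < μ₀ {z | Tendsto z atTop (nhds 0) ∧ ∃ s : ℝ, s < r ∧ ∀ n, |z n - y n| ≤ s})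
    (hnonaligned : ∀ (j : ℕ) (α : ℝ), μ₀ {x | x j = α} = 0)
    (μ : Measure (ℕ → ℝ))
    (hμ : μ = Measure.map Psi (μ₀.prod (gaussianReal 0 1)))
    (x : ℕ → ℝ) (hx : ∃ a : ℝ, Tendsto x atTop (nhds a)) (r : ℝ) (hr : 0 < r) :
    0 < μ {z | ∃ s : ℝ, s < r ∧ ∀ n, |z n - x n| ≤ s} :=
  pushforward_fully_supported_on_c_general μ₀ hfull μ hμ x hx r hr
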